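/- Suppose ⟨C_α : α < κ⟩ is a coherent C-sequence (C_δ = C_α ∩ δ for all δ ∈ acc(C_α)) such that for every club D ⊆ κ there exists γ > 0 with sup(nacc(C_γ) ∩ D) = γ. Then the sequence is a witness that there is no club C ⊆ κ with C ∩ α = C_α for club-many α ∈ acc(C); in fact, for every club D ⊆ κ, there exists γ with D ∩ γ ⊄ C_γ, i.e., the sequence is nontrivial (it is a □(κ)-like sequence). -/

import Mathlib

open Cardinal Set

/-- The walk `Tr(α,β) : ω → κ` along the `C`-sequence `C`:
`Tr(α,β)(0) = β`; `Tr(α,β)(n+1) = min(C_{Tr(α,β)(n)} \ α)` as long as the previous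
step is above `α`, and `α` from then on. -/
noncomputable def TrW (C : Ordinal → Set Ordinal) (α β : Ordinal) : ℕ → Ordinal
  | 0 => β
  | n + 1 => if α < TrW C α β n then sInf (C (TrW C α β n) ∩ Set.Ici α) else α

/-- `ρ₂(α,β)`: the length of the walk from `β` down to `α`. -/
noncomputable def rho2 (C : Ordinal → Set Ordinal) (α β : Ordinal) : ℕ :=
  sInf {n : ℕ | TrW C α β n = α}

/-- The image of `tr(α,β) = Tr(α,β) ↾ ρ₂(α,β)`. -/
noncomputable def trIm (C : Ordinal → Set Ordinal) (α β : Ordinal) : Set Ordinal :=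
  (fun n => TrW C α β n) '' {n : ℕ | n < rho2 C α β}

/-- `λ(α,β) := max{sup(C_{Tr(α,β)(i)} ∩ α) : i < ρ₂(α,β)}`. -/
noncomputable def lamW (C : Ordinal → Set Ordinal) (α β : Ordinal) : Ordinal :=
  sSup {x | ∃ n < rho2 C α β, x = sSup (C (TrW C α β n) ∩ Set.Iio α)}

/-- `λ₂(α,β) := sup(α ∩ {sup(C_δ ∩ α) : δ ∈ im(tr(α,β))})`. -/
noncomputable def lam2 (C : Ordinal → Set Ordinal) (α β : Ordinal) : Ordinal :=
  sSup (Set.Iio α ∩ {x | ∃ δ ∈ trIm C α β, x = sSup (C δ ∩ Set.Iio α)})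

/-- `acc(s) := {δ ∈ s : sup(s ∩ δ) = δ > 0}`. -/
def accSet (s : Set Ordinal) : Set Ordinal := {δ ∈ s | 0 < δ ∧ sSup (s ∩ Set.Iio δ) = δ}

/-- `C` is a `C`-sequence over `κ`: each `C α` is a closed subset of `α`
with `sup (C α) = sup α`. -/
def IsCSeq (κo : Ordinal) (C : Ordinal → Set Ordinal) : Prop :=
  ∀ α < κo, (∀ x ∈ C α, x < α) ∧ sSup (C α) = sSup (Set.Iio α) ∧
    ∀ δ < α, 0 < δ → sSup (C α ∩ Set.Iio δ) = δ → δ ∈ C α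

/-- `D` is a club in (the ordinal) `κ`: an unbounded subset of `κ` closed below `κ`. -/
def IsClubOrd (κo : Ordinal) (D : Set Ordinal) : Prop :=
  (∀ x ∈ D, x < κo) ∧ (∀ x < κo, ∃ y ∈ D, x < y) ∧
    ∀ δ < κo, 0 < δ → sSup (D ∩ Set.Iio δ) = δ → δ ∈ D

/-- `S` is stationary in `κ`: it meets every club in `κ`. -/
def IsStat (κo : Ordinal) (S : Set Ordinal) : Prop :=
  ∀ D : Set Ordinal, IsClubOrd κo D → (S ∩ D).Nonempty

/-- `acc⁺(A) := {α : sup(A ∩ α) = α > 0}`. -/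
def accPlus (A : Set Ordinal) : Set Ordinal := {α | 0 < α ∧ sSup (A ∩ Set.Iio α) = α}

lemma exists_gt_of_lt_sSup {S : Set Ordinal} {x : Ordinal} (h : x < sSup S) :
    ∃ y ∈ S, x < y := by
  by_contra hc
  push_neg at hc
  exact absurd (csSup_le' hc) (not_le.mpr h)

lemma sSup_eq_of_cofinal {S : Set Ordinal} {δ : Ordinal}
    (hb : ∀ y ∈ S, y < δ) (hcof : ∀ x < δ, ∃ y ∈ S, x < y) : sSup S = δ := by
  have h1 : sSup S ≤ δ := csSup_le' fun y hy => (hb y hy).le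
  rcases h1.lt_or_eq with h | h
  · obtain ⟨y, hyS, hy⟩ := hcof _ h
    exact absurd (le_csSup ⟨δ, fun z hz => (hb z hz).le⟩ hyS) (not_le.mpr hy)
  · exact h

lemma accPlus_club (κ : Cardinal) (hreg : κ.IsRegular) (huncb : Cardinal.aleph 0 < κ)
    (D : Set Ordinal) (hD : IsClubOrd κ.ord D) :
    IsClubOrd κ.ord (accPlus D ∩ Set.Iio κ.ord) := by
  obtain ⟨hDb, hDu, hDc⟩ := hD
  refine ⟨fun x hx => hx.2, ?_, ?_⟩
  · intro x hx
    choose F hFD hFlt using hDu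
    let f : ℕ → {z : Ordinal // z ∈ D} := fun n =>
      Nat.rec ⟨F x hx, hFD x hx⟩ (fun _ p => ⟨F p.1 (hDb p.1 p.2), hFD p.1 (hDb p.1 p.2)⟩) n
    have hmono : ∀ n, (f n).1 < (f (n+1)).1 := fun n => hFlt (f n).1 (hDb _ (f n).2)
    have hδκ : iSup (fun n => (f n).1) < κ.ord := by
      apply Ordinal.iSup_lt_ord_lift
      · rw [hreg.cof_eq, Cardinal.mk_nat, Cardinal.lift_aleph0]
        rwa [Cardinal.aleph_zero] at huncb
      · exact fun n => hDb _ (f n).2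
    set δ := iSup (fun n => (f n).1) with hδ
    have hle : ∀ n, (f n).1 ≤ δ := Ordinal.le_iSup (fun n => (f n).1)
    have hxδ : x < δ := lt_of_lt_of_le (hFlt x hx) (hle 0)
    have hlt : ∀ n, (f n).1 < δ := fun n => lt_of_lt_of_le (hmono n) (hle (n+1))
    refine ⟨δ, ⟨⟨(zero_le (a := x)).trans_lt hxδ, ?_⟩, hδκ⟩, hxδ⟩
    apply sSup_eq_of_cofinal (fun y hy => hy.2)
    intro z hz
    obtain ⟨n, hn⟩ : ∃ n, z < (f n).1 := by
      by_contra hc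
      push_neg at hc
      exact absurd (csSup_le' (by rintro _ ⟨n, rfl⟩; exact hc n) : δ ≤ z) (not_le.mpr hz)
    exact ⟨(f n).1, ⟨(f n).2, hlt n⟩, hn⟩
  · intro δ hδκ hδ0 hsup
    refine ⟨⟨hδ0, ?_⟩, hδκ⟩
    apply sSup_eq_of_cofinal (fun y hy => hy.2)
    intro x hx
    have hx' : x < sSup ((accPlus D ∩ Set.Iio κ.ord) ∩ Set.Iio δ) := by rw [hsup]; exact hx
    obtain ⟨y, ⟨⟨⟨hy0, hysup⟩, _⟩, hyδ⟩, hxy⟩ := exists_gt_of_lt_sSup hx'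
    have : x < sSup (D ∩ Set.Iio y) := by rw [hysup]; exact hxy
    obtain ⟨z, ⟨hzD, hzy⟩, hxz⟩ := exists_gt_of_lt_sSup this
    exact ⟨z, ⟨hzD, Set.mem_Iio.mpr (lt_trans (Set.mem_Iio.mp hzy) (Set.mem_Iio.mp hyδ))⟩, hxz⟩

/-- A coherent `C`-sequence with the hitting property "for every club `D ⊆ κ` there
is `γ > 0` with `sup(nacc(C_γ) ∩ D) = γ`" is nontrivial: there is no club `C ⊆ κ`
with `C ∩ α = C_α` for all `α ∈ acc(C)`; in fact, for every club `D ⊆ κ` there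
exists `γ` with `D ∩ γ ⊄ C_γ`. -/
theorem stmt16 (κ : Cardinal) (hreg : κ.IsRegular) (huncb : Cardinal.aleph 0 < κ)
    (C : Ordinal → Set Ordinal) (hC : IsCSeq κ.ord C)
    (hcoh : ∀ α < κ.ord, ∀ δ ∈ accSet (C α), C δ = C α ∩ Set.Iio δ)
    (hhit : ∀ D : Set Ordinal, IsClubOrd κ.ord D →
      ∃ γ : Ordinal, 0 < γ ∧ γ < κ.ord ∧ sSup ((C γ \ accSet (C γ)) ∩ D) = γ) :
    (¬ ∃ Cl : Set Ordinal, IsClubOrd κ.ord Cl ∧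
      ∀ α ∈ accSet Cl, α < κ.ord → Cl ∩ Set.Iio α = C α) ∧
    ∀ D : Set Ordinal, IsClubOrd κ.ord D →
      ∃ γ < κ.ord, ¬ (D ∩ Set.Iio γ ⊆ C γ) := by
  constructor
  · rintro ⟨Cl, hCl, hCla⟩
    obtain ⟨γ, hγ0, hγκ, hsup⟩ := hhit _ (accPlus_club κ hreg huncb Cl hCl)
    have hCb := (hC γ hγκ).1
    have hClγ : sSup (Cl ∩ Set.Iio γ) = γ := by
      apply sSup_eq_of_cofinal (fun y hy => hy.2)
      intro x hx
      have hx' : x < sSup ((C γ \ accSet (C γ)) ∩ (accPlus Cl ∩ Set.Iio κ.ord)) := by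
        rw [hsup]; exact hx
      obtain ⟨y, hyS, hxy⟩ := exists_gt_of_lt_sSup hx'
      have hyγ : y < γ := hCb y hyS.1.1
      have hyCl : y ∈ Cl := hCl.2.2 y hyS.2.2 hyS.2.1.1 hyS.2.1.2
      exact ⟨y, ⟨hyCl, hyγ⟩, hxy⟩
    have hγacc : γ ∈ accSet Cl := ⟨hCl.2.2 γ hγκ hγ0 hClγ, hγ0, hClγ⟩
    have hEq : Cl ∩ Set.Iio γ = C γ := hCla γ hγacc hγκ
    have h0 : (0:Ordinal) < sSup ((C γ \ accSet (C γ)) ∩ (accPlus Cl ∩ Set.Iio κ.ord)) := by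
      rw [hsup]; exact hγ0
    obtain ⟨δ, hδS, _⟩ := exists_gt_of_lt_sSup h0
    obtain ⟨⟨hδCγ, hδnacc⟩, ⟨hδ0', hδsup⟩, hδκ⟩ := hδS
    have hδγ : δ < γ := hCb δ hδCγ
    apply hδnacc
    refine ⟨hδCγ, hδ0', ?_⟩
    have heq2 : C γ ∩ Set.Iio δ = Cl ∩ Set.Iio δ := by
      rw [← hEq]
      ext z
      simp only [Set.mem_inter_iff, Set.mem_Iio]
      exact ⟨fun h => ⟨h.1.1, h.2⟩, fun h => ⟨⟨h.1, h.2.trans hδγ⟩, h.2⟩⟩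
    rw [heq2]
    exact hδsup
  · intro D hD
    by_contra hc
    push_neg at hc
    obtain ⟨γ, hγ0, hγκ, hsup⟩ := hhit _ (accPlus_club κ hreg huncb D hD)
    have h0 : (0:Ordinal) < sSup ((C γ \ accSet (C γ)) ∩ (accPlus D ∩ Set.Iio κ.ord)) := by
      rw [hsup]; exact hγ0
    obtain ⟨δ, hδS, _⟩ := exists_gt_of_lt_sSup h0
    obtain ⟨⟨hδCγ, hδnacc⟩, ⟨hδ0', hδsup⟩, hδκ⟩ := hδS
    have hδγ : δ < γ := (hC γ hγκ).1 δ hδCγ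
    apply hδnacc
    refine ⟨hδCγ, hδ0', ?_⟩
    have hsub : D ∩ Set.Iio δ ⊆ C γ ∩ Set.Iio δ := fun z hz =>
      ⟨hc γ hγκ ⟨hz.1, Set.mem_Iio.mpr (lt_trans (Set.mem_Iio.mp hz.2) hδγ)⟩, hz.2⟩
    have hne : (D ∩ Set.Iio δ).Nonempty := by
      obtain ⟨z, hz, _⟩ := exists_gt_of_lt_sSup (show (0:Ordinal) < sSup (D ∩ Set.Iio δ) by
        rw [hδsup]; exact hδ0')
      exact ⟨z, hz⟩
    apply le_antisymm (csSup_le' fun z hz => le_of_lt hz.2)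
    calc δ = sSup (D ∩ Set.Iio δ) := hδsup.symm
      _ ≤ sSup (C γ ∩ Set.Iio δ) :=
        csSup_le_csSup ⟨δ, fun z hz => le_of_lt hz.2⟩ hne hsub
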